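/- arXiv:1808.08882 — 2 statements merged into one kernel-verified Lean document; each statement's English description precedes it below -/
import Mathlib

section
/- Let E be a closed set in ℝⁿ and let D be a continuous nonnegative function on ℝⁿ which vanishes on E, is of class C¹ on Ω = ℝⁿ ∖ E, and is such that |∇D| is positive and constant on every connected component of Ω. Then E is convex. If, in addition, |∇D| = 1 on all of Ω, then D(x) = dist(x,E) for every x ∈ ℝⁿ. -/
open Metric MeasureTheory Set Filter
open scoped ENNReal Topology NNReal

noncomputable section

abbrev Euc (n : ℕ) := EuclideanSpace ℝ (Fin n)

/-! On a ball `B(x, r) ⊆ Ω` the norm `|∇D|` is a constant `c`. The mean value theorem along the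
segment from `x` to a nearest point of `E` gives `D x ≤ c · dist(x, E)`. Conversely, if
`D x < c r`, Ekeland's principle (in finite dimension: minimise `D + ε |· - x|`) yields a point of
`B(x, r)` where `|∇D| ≤ ε < c`; hence `D = c · dist(·, E)` near `x`, and `E ≠ ∅` since otherwise
`r` could be arbitrarily large. So `dist(·, E)²` is differentiable off `E`, and the Asplund
function `(|y|² - dist(y, E)²) / 2` is differentiable everywhere, with gradient at `y` the nearest
point `P y`. For `m` a convex combination of points of `E`, the Asplund function minus `⟪m, ·⟫` is
bounded below, so Ekeland's principle gives points `y` with `|P y - m| ≤ ε` for every `ε > 0`;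
thus `m ∈ E`.
-/

/-- Ekeland's variational principle in a proper space, where a minimiser of
`f + ε · dist(·, x₀)` works. -/
theorem Continuous.exists_forall_sub_mul_dist_le {X : Type*} [PseudoMetricSpace X] [ProperSpace X]
    {f : X → ℝ} (hf : Continuous f) (hbdd : BddBelow (range f)) (x₀ : X) {ε : ℝ} (hε : 0 < ε) :
    ∃ y, f y + ε * dist y x₀ ≤ f x₀ ∧ ∀ z, f y - ε * dist z y ≤ f z := by
  obtain ⟨B, hB⟩ := hbdd
  set g : X → ℝ := fun z => f z + ε * dist z x₀
  have hcoercive : ∀ᶠ z in cocompact X, g x₀ ≤ g z := by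
    filter_upwards [(isCompact_closedBall x₀ ((f x₀ - B) / ε)).compl_mem_cocompact] with z hz
    rw [mem_compl_iff, mem_closedBall, not_le, div_lt_iff₀ hε] at hz
    have : B ≤ f z := hB (mem_range_self z)
    simp only [g, dist_self, mul_zero, add_zero]
    linarith
  obtain ⟨y, hy⟩ := (show Continuous g by fun_prop).exists_forall_le' x₀ hcoercive
  refine ⟨y, by simpa [g] using hy x₀, fun z => ?_⟩
  have hyz : f y + ε * dist y x₀ ≤ f z + ε * dist z x₀ := hy z
  linarith [mul_le_mul_of_nonneg_left (dist_triangle z y x₀) hε.le]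

section

variable {F : Type*} [NormedAddCommGroup F] [NormedSpace ℝ F]

theorem HasFDerivAt.neg_mul_norm_le_apply {f : F → ℝ} {L : F →L[ℝ] ℝ} {x : F} {ε : ℝ}
    (hf : HasFDerivAt f L x) (h : ∀ z, f x - ε * dist z x ≤ f z) (v : F) : -(ε * ‖v‖) ≤ L v := by
  set g : ℝ → ℝ := fun t => f (x + t • v) + ε * ‖v‖ * t
  have hg : HasDerivAt g (L v + ε * ‖v‖) 0 := by
    have hline : HasDerivAt (fun t : ℝ => x + t • v) v 0 := by
      simpa using ((hasDerivAt_id (0 : ℝ)).smul_const v).const_add x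
    have hf' : HasFDerivAt f L (x + (0 : ℝ) • v) := by simpa using hf
    have := (hf'.comp_hasDerivAt (0 : ℝ) hline).add ((hasDerivAt_id (0 : ℝ)).const_mul (ε * ‖v‖))
    rwa [mul_one] at this
  have hmin : IsLocalMinOn g (Ici 0) 0 := by
    refine IsMinOn.localize fun t (ht : 0 ≤ t) => ?_
    have := h (x + t • v)
    simp only [dist_eq_norm, add_sub_cancel_left, norm_smul, Real.norm_of_nonneg ht] at this
    show f (x + (0 : ℝ) • v) + ε * ‖v‖ * 0 ≤ f (x + t • v) + ε * ‖v‖ * t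
    rw [zero_smul, add_zero, mul_zero, add_zero]
    linarith
  have hseg : segment ℝ (0 : ℝ) (0 + 1) ⊆ Ici 0 := by
    rw [zero_add, segment_eq_Icc zero_le_one]
    exact Icc_subset_Ici_self
  have := hmin.hasFDerivWithinAt_nonneg hg.hasFDerivAt.hasFDerivWithinAt
    (mem_posTangentConeAt_of_segment_subset hseg)
  simp only [ContinuousLinearMap.toSpanSingleton_apply, smul_eq_mul, one_mul] at this
  linarith

theorem HasFDerivAt.norm_le_of_forall_sub_mul_dist_le {f : F → ℝ} {L : F →L[ℝ] ℝ} {x : F} {ε : ℝ}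
    (hf : HasFDerivAt f L x) (hε : 0 ≤ ε) (h : ∀ z, f x - ε * dist z x ≤ f z) : ‖L‖ ≤ ε := by
  refine L.opNorm_le_bound hε fun v => abs_le.2 ⟨hf.neg_mul_norm_le_apply h v, ?_⟩
  simpa using hf.neg_mul_norm_le_apply h (-v)

theorem norm_sub_le_of_norm_fderiv_le_on_ball {G : Type*} [NormedAddCommGroup G] [NormedSpace ℝ G]
    {f : F → G} (hf : Continuous f) {x : F} {r C : ℝ} (hr : 0 < r)
    (hd : ∀ y ∈ ball x r, DifferentiableAt ℝ f y) (hC : ∀ y ∈ ball x r, ‖fderiv ℝ f y‖ ≤ C)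
    {p : F} (hp : p ∈ closedBall x r) : ‖f p - f x‖ ≤ C * ‖p - x‖ := by
  rw [← closure_ball x hr.ne'] at hp
  have hclosed : IsClosed {y | ‖f y - f x‖ ≤ C * ‖y - x‖} := isClosed_le (by fun_prop) (by fun_prop)
  exact closure_minimal (fun y hy => (convex_ball x r).norm_image_sub_le_of_norm_fderiv_le hd hC
    (mem_ball_self hr) hy) hclosed hp

theorem mul_le_of_le_norm_fderiv_on_ball [ProperSpace F] {f : F → ℝ} (hf : Continuous f)
    (hf0 : ∀ y, 0 ≤ f y) {x : F} {r c : ℝ} (hr : 0 < r)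
    (hd : ∀ y ∈ ball x r, DifferentiableAt ℝ f y) (hc : ∀ y ∈ ball x r, c ≤ ‖fderiv ℝ f y‖) :
    c * r ≤ f x := by
  by_contra! hlt
  obtain ⟨ε, hxε, hεc⟩ := exists_between ((div_lt_iff₀ hr).2 hlt)
  have hε : 0 < ε := (div_nonneg (hf0 x) hr.le).trans_lt hxε
  obtain ⟨y, hyx, hslope⟩ :=
    hf.exists_forall_sub_mul_dist_le ⟨0, by rintro _ ⟨z, rfl⟩; exact hf0 z⟩ x hε
  have hy : y ∈ ball x r :=
    lt_of_mul_lt_mul_left (by linarith [hf0 y, (div_lt_iff₀ hr).1 hxε]) hε.le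
  have := (hd y hy).hasFDerivAt.norm_le_of_forall_sub_mul_dist_le hε.le hslope
  linarith [hc y hy]

theorem eq_mul_infDist_of_norm_fderiv_eq [ProperSpace F] {E : Set F} (hE : IsClosed E)
    (hne : E.Nonempty) {f : F → ℝ} (hf : Continuous f) (hf0 : ∀ y, 0 ≤ f y)
    (hfE : ∀ y ∈ E, f y = 0) {x : F} (hx : x ∉ E) {c : ℝ}
    (hd : ∀ y ∈ ball x (infDist x E), DifferentiableAt ℝ f y)
    (hc : ∀ y ∈ ball x (infDist x E), ‖fderiv ℝ f y‖ = c) :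
    f x = c * infDist x E := by
  have hr : 0 < infDist x E := (hE.notMem_iff_infDist_pos hne).1 hx
  obtain ⟨p, hpE, hp⟩ := hE.exists_infDist_eq_dist hne x
  have hupper := norm_sub_le_of_norm_fderiv_le_on_ball hf hr hd (fun y hy => (hc y hy).le)
    (p := p) (by rw [mem_closedBall, dist_comm, hp])
  rw [hfE p hpE, zero_sub, norm_neg, Real.norm_of_nonneg (hf0 x), ← dist_eq_norm, dist_comm,
    ← hp] at hupper
  exact le_antisymm hupper (mul_le_of_le_norm_fderiv_on_ball hf hf0 hr hd fun y hy => (hc y hy).ge)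

end

section Asplund

open scoped InnerProductSpace

variable {F : Type*} [NormedAddCommGroup F] [InnerProductSpace ℝ F]

theorem DifferentiableAt.hasFDerivAt_innerSL_of_forall_add_inner_le {f : F → ℝ} {x e : F}
    (hf : DifferentiableAt ℝ f x) (h : ∀ y, f x + ⟪e, y - x⟫_ℝ ≤ f y) :
    HasFDerivAt f (innerSL ℝ e) x := by
  have hmin : IsLocalMin (fun y => f y - ⟪e, y⟫_ℝ) x :=
    IsMinOn.isLocalMin (fun y _ => show f x - ⟪e, x⟫_ℝ ≤ f y - ⟪e, y⟫_ℝ by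
      linarith [h y, inner_sub_right (𝕜 := ℝ) e y x]) univ_mem
  have hfx := hf.hasFDerivAt
  rwa [sub_eq_zero.1 (hmin.hasFDerivAt_eq_zero (hfx.sub (innerSL ℝ e).hasFDerivAt))] at hfx

/-- The Asplund function of `E`, equal to `⨆ e ∈ E, ⟪e, y⟫ - ‖e‖² / 2`. -/
def asplund (E : Set F) (y : F) : ℝ := (‖y‖ ^ 2 - infDist y E ^ 2) / 2

theorem inner_sub_le_asplund {E : Set F} {e : F} (he : e ∈ E) (y : F) :
    ⟪e, y⟫_ℝ - ‖e‖ ^ 2 / 2 ≤ asplund E y := by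
  have hd : infDist y E ≤ ‖y - e‖ := dist_eq_norm y e ▸ infDist_le_dist_of_mem he
  have hd2 := pow_le_pow_left₀ infDist_nonneg hd 2
  rw [asplund]
  linarith [norm_sub_sq_real y e, real_inner_comm e y]

theorem asplund_add_inner_le {E : Set F} {x e : F} (he : e ∈ E) (hd : infDist x E = dist x e)
    (y : F) : asplund E x + ⟪e, y - x⟫_ℝ ≤ asplund E y := by
  have hx : asplund E x = ⟪e, x⟫_ℝ - ‖e‖ ^ 2 / 2 := by
    rw [asplund, hd, dist_eq_norm]
    linarith [norm_sub_sq_real x e, real_inner_comm e x]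
  rw [hx, inner_sub_right]
  linarith [inner_sub_le_asplund he y]

theorem hasFDerivAt_asplund_of_mem {E : Set F} {x : F} (hx : x ∈ E) :
    HasFDerivAt (asplund E) (innerSL ℝ x) x := by
  rw [hasFDerivAt_iff_isLittleO_nhds_zero]
  refine Asymptotics.IsBigO.trans_isLittleO (g := fun v => ‖v‖ ^ 2) ?_
    (Asymptotics.isLittleO_norm_pow_id one_lt_two)
  refine Asymptotics.IsBigO.of_bound 1 (Eventually.of_forall fun v => ?_)
  have hd : infDist (x + v) E ≤ ‖v‖ := by
    simpa [dist_eq_norm] using infDist_le_dist_of_mem (x := x + v) hx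
  have hrem : asplund E (x + v) - asplund E x - innerSL ℝ x v
      = (‖v‖ ^ 2 - infDist (x + v) E ^ 2) / 2 := by
    simp only [asplund, infDist_zero_of_mem hx, innerSL_apply_apply, norm_add_sq_real]
    ring
  rw [hrem, Real.norm_eq_abs, abs_le, norm_pow, norm_norm, one_mul]
  constructor <;> linarith [pow_le_pow_left₀ infDist_nonneg hd 2, sq_nonneg (infDist (x + v) E)]

theorem convex_of_differentiable_asplund [ProperSpace F] {E : Set F} (hE : IsClosed E)
    (h : Differentiable ℝ (asplund E)) : Convex ℝ E := by
  rcases E.eq_empty_or_nonempty with rfl | hne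
  · exact convex_empty
  choose P hPE hPd using fun y => hE.exists_infDist_eq_dist hne y
  intro a ha b hb s t hs ht hst
  set m := s • a + t • b
  set ψ : F → ℝ := fun y => asplund E y - ⟪m, y⟫_ℝ
  have hψ : ∀ y, HasFDerivAt ψ (innerSL ℝ (P y - m)) y := fun y => by
    rw [map_sub]
    exact ((h y).hasFDerivAt_innerSL_of_forall_add_inner_le
      (asplund_add_inner_le (hPE y) (hPd y))).sub (innerSL ℝ m).hasFDerivAt
  have hψ_bdd : BddBelow (range ψ) := by
    refine ⟨-(s * ‖a‖ ^ 2 + t * ‖b‖ ^ 2) / 2, ?_⟩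
    rintro _ ⟨y, rfl⟩
    have hm : ⟪m, y⟫_ℝ = s * ⟪a, y⟫_ℝ + t * ⟪b, y⟫_ℝ := by
      simp only [m, inner_add_left, real_inner_smul_left]
    have hsplit : asplund E y = s * asplund E y + t * asplund E y := by
      rw [← add_mul, hst, one_mul]
    show _ ≤ asplund E y - ⟪m, y⟫_ℝ
    linarith [mul_le_mul_of_nonneg_left (inner_sub_le_asplund ha y) hs,
      mul_le_mul_of_nonneg_left (inner_sub_le_asplund hb y) ht]
  have hψ_cont : Continuous ψ := h.continuous.sub (by fun_prop)
  have hdist : ∀ ε > 0, infDist m E ≤ 0 + ε := fun ε hε => by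
    obtain ⟨y, -, hslope⟩ := hψ_cont.exists_forall_sub_mul_dist_le hψ_bdd 0 hε
    have hPm := (hψ y).norm_le_of_forall_sub_mul_dist_le hε.le hslope
    rw [innerSL_apply_norm] at hPm
    calc infDist m E ≤ dist m (P y) := infDist_le_dist_of_mem (hPE y)
      _ ≤ 0 + ε := by rwa [dist_comm, dist_eq_norm, zero_add]
  have hm0 : infDist m E = 0 := le_antisymm (le_of_forall_pos_le_add hdist) infDist_nonneg
  exact hE.closure_eq ▸ (mem_closure_iff_infDist_zero hne).2 hm0

end Asplund

def ConstOnComponentsIn {X α : Type*} [TopologicalSpace X] (g : X → α) (U : Set X) : Prop :=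
  ∀ x ∈ U, ∀ y ∈ connectedComponentIn U x, g y = g x

theorem ConstOnComponentsIn.eq_of_mem_ball {X α : Type*} [SeminormedAddCommGroup X]
    [NormedSpace ℝ X] {g : X → α} {U : Set X} (hg : ConstOnComponentsIn g U) {x : X}
    (hx : x ∈ U) {r : ℝ} (hball : ball x r ⊆ U) {y : X} (hy : y ∈ ball x r) : g y = g x :=
  hg x hx y ((convex_ball x r).isPreconnected.subset_connectedComponentIn
    (mem_ball_self (pos_of_mem_ball hy)) hball hy)

section ConstantGradientNorm

variable {F : Type*} [NormedAddCommGroup F] [InnerProductSpace ℝ F] [ProperSpace F]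
  {E : Set F} {D : F → ℝ}

theorem norm_gradient (f : F → ℝ) (x : F) : ‖gradient f x‖ = ‖fderiv ℝ f x‖ :=
  (InnerProductSpace.toDual ℝ F).symm.norm_map _

theorem nonempty_of_norm_gradient_pos (hD : Continuous D) (hD0 : ∀ x, 0 ≤ D x)
    (hdiff : ∀ x ∈ Eᶜ, DifferentiableAt ℝ D x) (hpos : ∀ x ∈ Eᶜ, 0 < ‖gradient D x‖)
    (hconst : ConstOnComponentsIn (fun x => ‖gradient D x‖) Eᶜ) : E.Nonempty := by
  rw [nonempty_iff_ne_empty]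
  rintro rfl
  rw [compl_empty] at hdiff hpos hconst
  have h0 : (0 : F) ∈ univ := mem_univ 0
  have hc := hpos 0 h0
  have hr : 0 < (D 0 + 1) / ‖gradient D 0‖ := div_pos (by linarith [hD0 0]) hc
  have := mul_le_of_le_norm_fderiv_on_ball hD hD0 hr (fun y _ => hdiff y (mem_univ y))
    fun y hy => (norm_gradient D y ▸ hconst.eq_of_mem_ball h0 (subset_univ _) hy).ge
  rw [mul_div_cancel₀ _ hc.ne'] at this
  linarith

theorem eq_norm_gradient_mul_infDist (hE : IsClosed E) (hne : E.Nonempty) (hD : Continuous D)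
    (hD0 : ∀ x, 0 ≤ D x) (hDE : ∀ x ∈ E, D x = 0) (hdiff : ∀ x ∈ Eᶜ, DifferentiableAt ℝ D x)
    (hconst : ConstOnComponentsIn (fun x => ‖gradient D x‖) Eᶜ) {x : F} (hx : x ∉ E) :
    D x = ‖gradient D x‖ * infDist x E :=
  eq_mul_infDist_of_norm_fderiv_eq hE hne hD hD0 hDE hx
    (fun _ hy => hdiff _ (ball_infDist_subset_compl hy))
    fun y hy => norm_gradient D y ▸ hconst.eq_of_mem_ball hx ball_infDist_subset_compl hy

theorem differentiable_asplund (hE : IsClosed E) (hD : Continuous D) (hD0 : ∀ x, 0 ≤ D x)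
    (hDE : ∀ x ∈ E, D x = 0) (hdiff : ∀ x ∈ Eᶜ, DifferentiableAt ℝ D x)
    (hpos : ∀ x ∈ Eᶜ, 0 < ‖gradient D x‖)
    (hconst : ConstOnComponentsIn (fun x => ‖gradient D x‖) Eᶜ) :
    Differentiable ℝ (asplund E) := by
  have hne := nonempty_of_norm_gradient_pos hD hD0 hdiff hpos hconst
  intro x
  by_cases hx : x ∈ E
  · exact (hasFDerivAt_asplund_of_mem hx).differentiableAt
  set c := ‖gradient D x‖
  have hlocal : asplund E =ᶠ[𝓝 x] fun y => (‖y‖ ^ 2 - (D y / c) ^ 2) / 2 := by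
    filter_upwards [isOpen_ball.mem_nhds (mem_ball_self ((hE.notMem_iff_infDist_pos hne).1 hx))]
      with y hy
    rw [asplund, eq_norm_gradient_mul_infDist hE hne hD hD0 hDE hdiff hconst
      (ball_infDist_subset_compl hy), hconst.eq_of_mem_ball hx ball_infDist_subset_compl hy,
      mul_div_cancel_left₀ _ (hpos x hx).ne']
  have hsq : DifferentiableAt ℝ (fun y : F => ‖y‖ ^ 2) x := differentiableAt_id.norm_sq ℝ
  have hDx := hdiff x hx
  exact DifferentiableAt.congr_of_eventuallyEq (by fun_prop) hlocal

end ConstantGradientNorm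

/-- if `D` is continuous, nonnegative, vanishes on the closed set `E`, is `C¹`
on `Ω = ℝⁿ ∖ E`, and `|∇D|` is positive and constant on each connected component of `Ω`,
then `E` is convex; and if moreover `|∇D| = 1` on all of `Ω`, then `D = dist(·, E)`. -/
theorem convex_of_constant_gradient_norm (n : ℕ) (E : Set (Euc n)) (hE : IsClosed E)
    (D : Euc n → ℝ) (hcont : Continuous D) (hnonneg : ∀ x, 0 ≤ D x)
    (hzero : ∀ x ∈ E, D x = 0) (hC1 : ContDiffOn ℝ 1 D Eᶜ)
    (hpos : ∀ x ∈ Eᶜ, 0 < ‖gradient D x‖)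
    (hconst : ∀ x ∈ Eᶜ, ∀ y ∈ connectedComponentIn Eᶜ x, ‖gradient D y‖ = ‖gradient D x‖) :
    Convex ℝ E ∧
      ((∀ x ∈ Eᶜ, ‖gradient D x‖ = 1) → ∀ x, D x = infDist x E) := by
  have hdiff : ∀ x ∈ Eᶜ, DifferentiableAt ℝ D x := fun x hx =>
    (hC1.contDiffAt (hE.isOpen_compl.mem_nhds hx)).differentiableAt one_ne_zero
  refine ⟨convex_of_differentiable_asplund hE
    (differentiable_asplund hE hcont hnonneg hzero hdiff hpos hconst), fun hunit x => ?_⟩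
  by_cases hx : x ∈ E
  · rw [hzero x hx, infDist_zero_of_mem hx]
  · have hne := nonempty_of_norm_gradient_pos hcont hnonneg hdiff hpos hconst
    rw [eq_norm_gradient_mul_infDist hE hne hcont hnonneg hzero hdiff hconst hx, hunit x hx,
      one_mul]
end
end

section
/- Let d < n be a positive integer, let P ⊂ ℝⁿ be an affine d-plane, and let E ⊂ P be a closed convex d-Ahlfors regular set. If the function x ↦ dist(x,E) is of class C² on ℝⁿ ∖ P, then E = P. -/
/-!
Suppose `E ≠ P` and project a point `q ∈ P \ E` onto `E`, getting `p ∈ E`. As `E` spans `P`, some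
`z ∈ E` lies strictly inside the supporting half-space at `p` with normal `q - p`, so along the
line `s ↦ p + s (z - p)` the distance to `E` vanishes for `s ∈ [0, 1]` and is at least `c |s|` for
`s < 0`. Lifting this line off `P` by a normal vector `ν`, Pythagoras makes `dist(·, E)²` along the
lifted line a `C²` function of `s` that is constant on `[0, 1]` but grows quadratically for
`s < 0`; this is impossible, since its first two derivatives vanish at `0`. Ahlfors regularity
gives `ℋ^d(E) > 0`, and a convex set of positive `ℋ^d`-measure has dimension `d`, so `E` spans `P`.
-/

open Metric MeasureTheory Set Filter
open scoped ENNReal Topology NNReal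

noncomputable section

open Module
open scoped RealInnerProductSpace

theorem iteratedDeriv_eq_zero_of_eqOn_Icc {h : ℝ → ℝ} {n : WithTop ℕ∞} {k : ℕ}
    (hh : ContDiff ℝ n h) (hkn : k ≤ n) (hk : k ≠ 0) {a b : ℝ} (hab : a < b)
    (hflat : ∀ s ∈ Icc a b, h s = h a) :
    iteratedDeriv k h a = 0 := by
  have hIoo : EqOn (iteratedDeriv k h) 0 (Ioo a b) := fun s hs => by
    have hconst : h =ᶠ[𝓝 s] fun _ => h a :=
      eventually_of_mem (Ioo_mem_nhds hs.1 hs.2) fun t ht => hflat t (Ioo_subset_Icc_self ht)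
    rw [hconst.iteratedDeriv_eq, iteratedDeriv_const, if_neg hk, Pi.zero_apply]
  have hcont := (hh.continuous_iteratedDeriv k hkn).continuousOn (s := Icc a b)
  exact hIoo.of_subset_closure hcont continuousOn_const Ioo_subset_Icc_self
    (closure_Ioo hab.ne).superset (left_mem_Icc.2 hab.le)

theorem ContDiff.isLittleO_sub_sq_of_eqOn_Icc {h : ℝ → ℝ} (hh : ContDiff ℝ 2 h) {b : ℝ}
    (hb : 0 < b) (hflat : ∀ s ∈ Icc 0 b, h s = h 0) :
    (fun s => h s - h 0) =o[𝓝 0] fun s => s ^ 2 := by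
  have h1 := iteratedDeriv_eq_zero_of_eqOn_Icc (k := 1) hh (by norm_num) one_ne_zero hb hflat
  have h2 := iteratedDeriv_eq_zero_of_eqOn_Icc (k := 2) hh le_rfl two_ne_zero hb hflat
  simpa [taylor_within_apply, Finset.sum_range_succ, iteratedDerivWithin_univ, h1, h2]
    using taylor_isLittleO_univ (n := 2) (x₀ := 0) hh

theorem ContDiff.exists_lt_add_mul_sq_of_eqOn_Icc {h : ℝ → ℝ} (hh : ContDiff ℝ 2 h) {b : ℝ}
    (hb : 0 < b) (hflat : ∀ s ∈ Icc 0 b, h s = h 0) {c : ℝ} (hc : 0 < c) :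
    ∃ s < 0, h s < h 0 + c * s ^ 2 := by
  have hbound := (hh.isLittleO_sub_sq_of_eqOn_Icc hb hflat).bound (half_pos hc)
  obtain ⟨s, hs, hs0⟩ := ((hbound.filter_mono (nhdsWithin_le_nhds (s := Iio 0))).and
    self_mem_nhdsWithin).exists
  refine ⟨s, hs0, ?_⟩
  have hsq : 0 < s ^ 2 := sq_pos_of_ne_zero hs0.ne
  rw [Real.norm_eq_abs, Real.norm_eq_abs, abs_of_pos hsq] at hs
  nlinarith [le_abs_self (h s - h 0), mul_pos hc hsq]

section InnerProductSpace

variable {V : Type*} [NormedAddCommGroup V] [InnerProductSpace ℝ V]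

theorem Convex.affineSpan_eq_of_hausdorffMeasure_ne_zero [FiniteDimensional ℝ V]
    [MeasurableSpace V] [BorelSpace V] {E : Set V} (hconv : Convex ℝ E)
    {P : AffineSubspace ℝ V} (hEP : E ⊆ P) {d : ℕ} (hP : finrank ℝ P.direction = d)
    (hE : μH[d] E ≠ 0) : affineSpan ℝ E = P := by
  obtain ⟨z, hz⟩ := nonempty_of_measure_ne_zero hE
  have hdim : (d : ℝ≥0∞) ≤ finrank ℝ (vectorSpan ℝ E) := by
    rw [← Real.Convex.dimH_eq_finrank_vectorSpan hconv ⟨z, hz⟩]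
    exact_mod_cast le_dimH_of_hausdorffMeasure_ne_zero (d := d) (by simpa using hE)
  have hle : vectorSpan ℝ E ≤ P.direction := by
    rw [← direction_affineSpan]
    exact AffineSubspace.direction_le (affineSpan_le.2 hEP)
  refine AffineSubspace.ext_of_direction_eq ?_ ⟨z, subset_affineSpan ℝ E hz, hEP hz⟩
  rw [direction_affineSpan]
  exact Submodule.eq_of_le_of_finrank_le hle (hP ▸ by exact_mod_cast hdim)

theorem exists_inner_sub_ne_zero_of_mem_vectorSpan {E : Set V} {p u : V} (hp : p ∈ E)
    (hu : u ∈ vectorSpan ℝ E) (hu0 : u ≠ 0) : ∃ z ∈ E, ⟪u, z - p⟫ ≠ 0 := by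
  by_contra! horth
  have hker : vectorSpan ℝ E ≤ LinearMap.ker (innerₛₗ ℝ u) := by
    rw [vectorSpan_eq_span_vsub_set_right ℝ hp, Submodule.span_le]
    rintro _ ⟨z, hz, rfl⟩
    exact horth z hz
  exact hu0 (inner_self_eq_zero.1 (hker hu))

theorem inner_sub_div_norm_le_infDist {E : Set V} (hE : E.Nonempty) {u p : V}
    (hsupp : ∀ e ∈ E, ⟪u, e - p⟫ ≤ 0) (x : V) : ⟪u, x - p⟫ / ‖u‖ ≤ infDist x E := by
  refine (le_infDist hE).2 fun e he => div_le_of_le_mul₀ (norm_nonneg _) dist_nonneg ?_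
  calc ⟪u, x - p⟫ = ⟪u, x - e⟫ + ⟪u, e - p⟫ := by rw [← inner_add_right, sub_add_sub_cancel]
    _ ≤ ⟪u, x - e⟫ := add_le_of_nonpos_right (hsupp e he)
    _ ≤ ‖u‖ * ‖x - e‖ := real_inner_le_norm u (x - e)
    _ = dist x e * ‖u‖ := by rw [dist_eq_norm, mul_comm]

theorem IsClosed.exists_segment_subset_and_linear_le_infDist [CompleteSpace V] {E : Set V}
    (hclosed : IsClosed E) (hconv : Convex ℝ E) {q : V} (hq : q ∈ affineSpan ℝ E) (hqE : q ∉ E) :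
    ∃ p v : V, ∃ c > 0, (∀ s : ℝ, p + s • v ∈ affineSpan ℝ E) ∧
      (∀ s ∈ Icc (0 : ℝ) 1, p + s • v ∈ E) ∧ ∀ s : ℝ, c * -s ≤ infDist (p + s • v) E := by
  have hne : E.Nonempty := (affineSpan_nonempty (k := ℝ)).1 ⟨q, hq⟩
  obtain ⟨p, hpE, hproj⟩ :=
    exists_norm_eq_iInf_of_complete_convex hne hclosed.isComplete hconv q
  have hsupp : ∀ e ∈ E, ⟪q - p, e - p⟫ ≤ 0 :=
    (norm_eq_iInf_iff_real_inner_le_zero hconv hpE).1 hproj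
  have hu : q - p ∈ vectorSpan ℝ E := by
    rw [← direction_affineSpan]
    exact AffineSubspace.vsub_mem_direction hq (subset_affineSpan ℝ E hpE)
  have hu0 : q - p ≠ 0 := sub_ne_zero.2 fun h => hqE (h ▸ hpE)
  obtain ⟨z, hzE, hz⟩ := exists_inner_sub_ne_zero_of_mem_vectorSpan hpE hu hu0
  have ha : 0 < -⟪q - p, z - p⟫ := neg_pos.2 ((hsupp z hzE).lt_of_ne hz)
  refine ⟨p, z - p, -⟪q - p, z - p⟫ / ‖q - p‖, div_pos ha (norm_pos_iff.2 hu0), fun s => ?_,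
    fun s hs => hconv.add_smul_sub_mem hpE hzE hs, fun s => ?_⟩
  · simpa [AffineMap.lineMap_apply, add_comm] using
      AffineMap.lineMap_mem s (subset_affineSpan ℝ E hpE) (subset_affineSpan ℝ E hzE)
  · convert inner_sub_div_norm_le_infDist hne hsupp (p + s • (z - p)) using 1
    rw [add_sub_cancel_left, inner_smul_right]
    ring

theorem AffineSubspace.add_notMem_of_mem_orthogonal {P : AffineSubspace ℝ V} {y ν : V}
    (hy : y ∈ P) (hν : ν ∈ P.directionᗮ) (hν0 : ν ≠ 0) : y + ν ∉ P := fun hyν => by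
  have hνP : ν ∈ P.direction := by
    simpa using AffineSubspace.vsub_mem_direction hyν hy
  exact hν0 (inner_self_eq_zero.1 (Submodule.inner_right_of_mem_orthogonal hνP hν))

theorem infDist_add_sq_of_mem_orthogonal [ProperSpace V] {P : AffineSubspace ℝ V} {E : Set V}
    (hEP : E ⊆ P) (hE : IsClosed E) (hne : E.Nonempty) {y ν : V} (hy : y ∈ P)
    (hν : ν ∈ P.directionᗮ) : infDist (y + ν) E ^ 2 = infDist y E ^ 2 + ‖ν‖ ^ 2 := by
  have hpyth : ∀ e ∈ E, dist (y + ν) e ^ 2 = dist y e ^ 2 + ‖ν‖ ^ 2 := fun e he => by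
    have hye : y - e ∈ P.direction := AffineSubspace.vsub_mem_direction hy (hEP he)
    rw [dist_eq_norm, dist_eq_norm, add_sub_right_comm, norm_add_sq_real,
      Submodule.inner_right_of_mem_orthogonal hye hν, mul_zero, add_zero]
  obtain ⟨e, he, hye⟩ := hE.exists_infDist_eq_dist hne y
  obtain ⟨e', he', hye'⟩ := hE.exists_infDist_eq_dist hne (y + ν)
  apply le_antisymm
  · rw [hye, ← hpyth e he]
    gcongr
    exacts [infDist_nonneg, infDist_le_dist_of_mem he]
  · rw [hye', hpyth e' he']
    gcongr
    exacts [infDist_nonneg, infDist_le_dist_of_mem he']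

end InnerProductSpace

theorem eq_plane_of_distance_C2_general (n d : ℕ) (hdn : d < n)
    (P : AffineSubspace ℝ (Euc n)) (hP : Module.finrank ℝ P.direction = d)
    (E : Set (Euc n)) (hEP : E ⊆ (P : Set (Euc n)))
    (hclosed : IsClosed E) (hconv : Convex ℝ E)
    (C₀ : ℝ) (hC₀ : 1 ≤ C₀) (hunb : ¬Bornology.IsBounded E)
    (hAR : ∀ Q ∈ E, ∀ r > 0,
      ENNReal.ofReal (C₀⁻¹ * r ^ (d : ℝ)) ≤ Measure.hausdorffMeasure (d : ℝ) (E ∩ ball Q r) ∧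
      Measure.hausdorffMeasure (d : ℝ) (E ∩ ball Q r) ≤ ENNReal.ofReal (C₀ * r ^ (d : ℝ)))
    (hC2 : ContDiffOn ℝ 2 (fun x => infDist x E) ((P : Set (Euc n))ᶜ)) :
    E = (P : Set (Euc n)) := by
  obtain ⟨z, hz⟩ := Bornology.nonempty_of_not_isBounded hunb
  have hpos : μH[d] E ≠ 0 := by
    refine (lt_of_lt_of_le ?_ ((hAR z hz 1 one_pos).1.trans (measure_mono inter_subset_left))).ne'
    simpa using zero_lt_one.trans_le hC₀
  have hspan := hconv.affineSpan_eq_of_hausdorffMeasure_ne_zero hEP hP hpos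
  refine hEP.antisymm fun q hqP => by_contra fun hqE => ?_
  obtain ⟨p, v, c, hc, hline, hseg, hgrowth⟩ :=
    hclosed.exists_segment_subset_and_linear_le_infDist hconv (hspan ▸ hqP) hqE
  rw [hspan] at hline
  obtain ⟨ν, hνP, hν0⟩ : ∃ ν ∈ P.directionᗮ, ν ≠ 0 :=
    Submodule.exists_mem_ne_zero_of_ne_bot fun hbot => by
      rw [Submodule.orthogonal_eq_bot_iff] at hbot
      rw [← hP, hbot, finrank_top, finrank_euclideanSpace_fin] at hdn
      exact hdn.false
  have hsplit (s : ℝ) : infDist (p + s • v + ν) E ^ 2 = infDist (p + s • v) E ^ 2 + ‖ν‖ ^ 2 :=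
    infDist_add_sq_of_mem_orthogonal hEP hclosed ⟨z, hz⟩ (hline s) hνP
  have hh : ContDiff ℝ 2 fun s : ℝ => infDist (p + s • v + ν) E ^ 2 :=
    (hC2.comp_contDiff (by fun_prop) fun s =>
      AffineSubspace.add_notMem_of_mem_orthogonal (hline s) hνP hν0).pow 2
  have hp : infDist (p + (0 : ℝ) • v) E = 0 := infDist_zero_of_mem (hseg 0 ⟨le_rfl, zero_le_one⟩)
  obtain ⟨s, hs, hlt⟩ := hh.exists_lt_add_mul_sq_of_eqOn_Icc one_pos
    (fun s hs => by simp only [hsplit, infDist_zero_of_mem (hseg s hs), hp]) (pow_pos hc 2)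
  have hsq := pow_le_pow_left₀ (mul_nonneg hc.le (neg_nonneg.2 hs.le)) (hgrowth s) 2
  simp only [hsplit, hp] at hlt
  linarith [show (c * -s) ^ 2 = c ^ 2 * s ^ 2 by ring]

/-- if `E` is a closed convex `d`-Ahlfors regular subset of an affine `d`-plane
`P ⊂ ℝⁿ` and `x ↦ dist(x, E)` is `C²` on `ℝⁿ ∖ P`, then `E = P`. -/
theorem eq_plane_of_distance_C2 (n d : ℕ) (hn : 2 ≤ n) (hd : 0 < d) (hdn : d < n)
    (P : AffineSubspace ℝ (Euc n)) (hP : Module.finrank ℝ P.direction = d)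
    (E : Set (Euc n)) (hEP : E ⊆ (P : Set (Euc n)))
    (hclosed : IsClosed E) (hconv : Convex ℝ E)
    (C₀ : ℝ) (hC₀ : 1 ≤ C₀) (hunb : ¬Bornology.IsBounded E)
    (hAR : ∀ Q ∈ E, ∀ r > 0,
      ENNReal.ofReal (C₀⁻¹ * r ^ (d : ℝ)) ≤ Measure.hausdorffMeasure (d : ℝ) (E ∩ ball Q r) ∧
      Measure.hausdorffMeasure (d : ℝ) (E ∩ ball Q r) ≤ ENNReal.ofReal (C₀ * r ^ (d : ℝ)))
    (hC2 : ContDiffOn ℝ 2 (fun x => infDist x E) ((P : Set (Euc n))ᶜ)) :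
    E = (P : Set (Euc n)) :=
  eq_plane_of_distance_C2_general n d hdn P hP E hEP hclosed hconv C₀ hC₀ hunb hAR hC2
end
end
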